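/- arXiv:1806.03234 — 4 statements merged into one kernel-verified Lean document; each statement's English description precedes it below -/
import Mathlib

section
/- Let X : Ξ × Θ → ℝ^d be integrable with respect to P = P_Ξ ⊗ P_Θ, suppose E : Θ → ℝ^m is a bijection with measurable inverse E⁻¹, the density f_E of E_*P_Θ is continuous, and for every ξ ∈ Ξ the map y ↦ X(ξ, E⁻¹(y)) is continuous on ℝ^m. Define Φ : ℝ^m → ℝ^d by Φ(y) = (∫_Ξ X(ξ, E⁻¹(y − Y(ξ))) · f_E(y − Y(ξ)) dP_Ξ(ξ)) / (∫_Ξ f_E(y − Y(ξ)) dP_Ξ(ξ)) whenever the denominator is positive (and Φ(y) = 0 otherwise). Then Φ is a version of the conditional expectation of X given the measurement Z, i.e. Φ is Z_*P-integrable and ∫_{Z⁻¹(B)} X dP = ∫_{Z⁻¹(B)} Φ∘Z dP for every Borel set B ⊆ ℝ^m. -/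
/-!
Attach `ξ` to the measurement: `S (ξ, θ) = (Y ξ + E θ, ξ)`. Translating the error by `Y ξ` shows
that `S` pushes `P` forward to the measure with density `k (y, ξ) = fE (y - Y ξ)` with respect
to `volume ⊗ P_Ξ`, and `(ξ, θ) = (ξ, E⁻¹ (y - Y ξ))` is recovered from `S (ξ, θ)`. The theorem
thus becomes Bayes' formula for a joint density: integrating over `{y ∈ B}` first in `ξ`, the
inner integrals of `k • X` and of `k` are the numerator and the denominator of `Φ`, and
denominator • Φ = numerator for almost every `y`, because the denominator is finite almost
everywhere and, where it vanishes, so does `k (y, ·)` almost everywhere.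
-/

open MeasureTheory Set ENNReal Function

section General

variable {α β γ F : Type*} [MeasurableSpace α] [MeasurableSpace β] [MeasurableSpace γ]
  [NormedAddCommGroup F] [NormedSpace ℝ F]

theorem integrable_withDensity_ofReal_iff {μ : Measure α} {k : α → ℝ} (hk : Measurable k)
    (hk0 : ∀ x, 0 ≤ k x) {g : α → F} :
    Integrable g (μ.withDensity fun x => ENNReal.ofReal (k x)) ↔
      Integrable (fun x => k x • g x) μ := by
  rw [integrable_withDensity_iff_integrable_smul' hk.ennreal_ofReal
    (ae_of_all _ fun _ => ofReal_lt_top)]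
  simp only [ENNReal.toReal_ofReal (hk0 _)]

theorem setIntegral_withDensity_ofReal {μ : Measure α} {k : α → ℝ} (hk : Measurable k)
    (hk0 : ∀ x, 0 ≤ k x) (g : α → F) {s : Set α} (hs : MeasurableSet s) :
    ∫ x in s, g x ∂μ.withDensity (fun x => ENNReal.ofReal (k x)) = ∫ x in s, k x • g x ∂μ := by
  rw [setIntegral_withDensity_eq_setIntegral_toReal_smul hk.ennreal_ofReal
    (ae_of_all _ fun _ => ofReal_lt_top) g hs]
  simp only [ENNReal.toReal_ofReal (hk0 _)]

theorem map_fst_withDensity_prod (μ : Measure α) [SFinite μ] (ν : Measure β) [SFinite ν]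
    {f : α × β → ℝ≥0∞} (hf : Measurable f) :
    ((μ.prod ν).withDensity f).map Prod.fst = μ.withDensity fun x => ∫⁻ y, f (x, y) ∂ν := by
  ext s hs
  rw [Measure.map_apply measurable_fst hs, withDensity_apply _ (measurable_fst hs),
    withDensity_apply _ hs, ← prod_univ, ← Measure.prod_restrict, Measure.restrict_univ,
    lintegral_prod _ hf.aemeasurable]

theorem map_add_prod_eq_withDensity {V : Type*} [AddCommGroup V] [MeasurableSpace V]
    [MeasurableAdd₂ V] [MeasurableSub₂ V] (vol : Measure V) [vol.IsAddRightInvariant]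
    [SFinite vol] (π : Measure β) [SFinite π] (ρ : Measure γ) [SFinite ρ]
    {Y : β → V} (hY : Measurable Y) {E : γ → V} (hE : Measurable E)
    {h : V → ℝ≥0∞} (hh : Measurable h) (hEdens : ρ.map E = vol.withDensity h) :
    (π.prod ρ).map (fun p => (Y p.1 + E p.2, p.1)) =
      (vol.prod π).withDensity fun q => h (q.1 - Y q.2) := by
  refine Measure.ext_of_lintegral _ fun φ hφ => ?_
  rw [lintegral_map hφ (by fun_prop), lintegral_prod _ (by fun_prop),
    lintegral_withDensity_eq_lintegral_mul _ (by fun_prop) hφ,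
    lintegral_prod_symm _ (by fun_prop)]
  refine lintegral_congr fun ξ => ?_
  rw [← lintegral_map (f := fun e => φ (Y ξ + e, ξ)) (by fun_prop) hE, hEdens,
    lintegral_withDensity_eq_lintegral_mul _ hh (by fun_prop)]
  conv_rhs => rw [← lintegral_add_right_eq_self _ (Y ξ)]
  simp only [Pi.mul_apply, add_sub_cancel_right, add_comm]

theorem measurePreserving_leftInverse_map {μ : Measure α} {S : α → γ} {Ψ : γ → α}
    (hS : Measurable S) (hΨ : Measurable Ψ) (hΨS : LeftInverse Ψ S) :
    MeasurePreserving Ψ (μ.map S) μ :=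
  ⟨hΨ, by rw [Measure.map_map hΨ hS, hΨS.comp_eq_id, Measure.map_id]⟩

theorem setIntegral_preimage_of_leftInverse {μ : Measure α} {S : α → γ} {Ψ : γ → α}
    (hS : Measurable S) (hΨ : Measurable Ψ) (hΨS : LeftInverse Ψ S) {G : α → F}
    (hG : AEStronglyMeasurable G μ) {s : Set γ} (hs : MeasurableSet s) :
    ∫ x in S ⁻¹' s, G x ∂μ = ∫ z in s, G (Ψ z) ∂μ.map S := by
  have hGΨ := hG.comp_quasiMeasurePreserving
    (measurePreserving_leftInverse_map hS hΨ hΨS).quasiMeasurePreserving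
  rw [setIntegral_map (f := fun z => G (Ψ z)) hs hGΨ hS.aemeasurable]
  simp only [hΨS _]

theorem integral_smul_eq_zero_of_integral_eq_zero {π : Measure β} {f : β → ℝ}
    (hf0 : ∀ ξ, 0 ≤ f ξ) (hf : Integrable f π) (h : ∫ ξ, f ξ ∂π = 0) (g : β → F) :
    ∫ ξ, f ξ • g ξ ∂π = 0 := by
  have hf_ae : f =ᵐ[π] 0 := (integral_eq_zero_iff_of_nonneg hf0 hf).1 h
  refine integral_eq_zero_of_ae ?_
  filter_upwards [hf_ae] with ξ hξ
  simp [hξ]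

end General

section Bayes

variable {α β F : Type*} [MeasurableSpace α] [MeasurableSpace β]
  [NormedAddCommGroup F] [NormedSpace ℝ F]

/-- Posterior mean of `G` given the first coordinate, for the prior `π` and the likelihood `k`. -/
noncomputable def bayesEstimate (π : Measure β) (k : α × β → ℝ) (G : α × β → F) (y : α) : F :=
  if 0 < ∫ ξ, k (y, ξ) ∂π then (∫ ξ, k (y, ξ) ∂π)⁻¹ • ∫ ξ, k (y, ξ) • G (y, ξ) ∂π else 0

variable {μ : Measure α} {π : Measure β} {k : α × β → ℝ} {ν : Measure (α × β)}

theorem toReal_lintegral_ofReal_eq_integral (hk : Measurable k) (hk0 : ∀ q, 0 ≤ k q) (y : α) :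
    (∫⁻ ξ, ENNReal.ofReal (k (y, ξ)) ∂π).toReal = ∫ ξ, k (y, ξ) ∂π :=
  (integral_eq_lintegral_of_nonneg_ae (ae_of_all _ fun _ => hk0 _)
    (hk.comp measurable_prodMk_left).aestronglyMeasurable).symm

variable [SFinite μ] [SFinite π] [IsFiniteMeasure ν]

theorem ae_lintegral_ofReal_lt_top (hk : Measurable k)
    (hν : ν = (μ.prod π).withDensity fun q => ENNReal.ofReal (k q)) :
    ∀ᵐ y ∂μ, ∫⁻ ξ, ENNReal.ofReal (k (y, ξ)) ∂π < ∞ := by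
  subst hν
  refine ae_lt_top hk.ennreal_ofReal.lintegral_prod_right' ?_
  rw [← setLIntegral_univ, ← withDensity_apply _ MeasurableSet.univ,
    ← map_fst_withDensity_prod μ π hk.ennreal_ofReal,
    Measure.map_apply measurable_fst MeasurableSet.univ]
  exact measure_ne_top _ _

theorem integral_smul_bayesEstimate (hk : Measurable k) (hk0 : ∀ q, 0 ≤ k q)
    (hν : ν = (μ.prod π).withDensity fun q => ENNReal.ofReal (k q)) (G : α × β → F) :
    ∀ᵐ y ∂μ, (∫ ξ, k (y, ξ) ∂π) • bayesEstimate π k G y = ∫ ξ, k (y, ξ) • G (y, ξ) ∂π := by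
  filter_upwards [ae_lintegral_ofReal_lt_top hk hν] with y hy
  unfold bayesEstimate
  split_ifs with hpos
  · exact smul_inv_smul₀ hpos.ne' _
  · have hint : Integrable (fun ξ => k (y, ξ)) π :=
      ⟨(hk.comp measurable_prodMk_left).aestronglyMeasurable,
        (hasFiniteIntegral_iff_ofReal (ae_of_all _ fun _ => hk0 _)).2 hy⟩
    have hzero : ∫ ξ, k (y, ξ) ∂π = 0 :=
      le_antisymm (not_lt.1 hpos) (integral_nonneg fun _ => hk0 _)
    rw [smul_zero, integral_smul_eq_zero_of_integral_eq_zero (fun _ => hk0 _) hint hzero]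

theorem integrable_bayesEstimate (hk : Measurable k) (hk0 : ∀ q, 0 ≤ k q)
    (hν : ν = (μ.prod π).withDensity fun q => ENNReal.ofReal (k q))
    {G : α × β → F} (hG : Integrable G ν) :
    Integrable (bayesEstimate π k G) (ν.map Prod.fst) := by
  rw [hν, map_fst_withDensity_prod μ π hk.ennreal_ofReal,
    integrable_withDensity_iff_integrable_smul' hk.ennreal_ofReal.lintegral_prod_right'
      (ae_lintegral_ofReal_lt_top hk hν)]
  refine ((integrable_withDensity_ofReal_iff hk hk0).1 (hν ▸ hG)).integral_prod_left.congr ?_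
  filter_upwards [integral_smul_bayesEstimate hk hk0 hν G] with y hy
  rw [toReal_lintegral_ofReal_eq_integral hk hk0, hy]

theorem setIntegral_preimage_fst_eq_setIntegral_bayesEstimate (hk : Measurable k)
    (hk0 : ∀ q, 0 ≤ k q) (hν : ν = (μ.prod π).withDensity fun q => ENNReal.ofReal (k q))
    {G : α × β → F} (hG : Integrable G ν) {B : Set α} (hB : MeasurableSet B) :
    ∫ q in Prod.fst ⁻¹' B, G q ∂ν = ∫ y in B, bayesEstimate π k G y ∂ν.map Prod.fst := by
  have hkG := (integrable_withDensity_ofReal_iff hk hk0).1 (hν ▸ hG)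
  calc ∫ q in Prod.fst ⁻¹' B, G q ∂ν = ∫ q in B ×ˢ univ, k q • G q ∂μ.prod π := by
        rw [hν, setIntegral_withDensity_ofReal hk hk0 _ (measurable_fst hB), prod_univ]
    _ = ∫ y in B, ∫ ξ, k (y, ξ) • G (y, ξ) ∂π ∂μ := by
        rw [setIntegral_prod _ hkG.integrableOn, Measure.restrict_univ]
    _ = ∫ y in B, (∫ ξ, k (y, ξ) ∂π) • bayesEstimate π k G y ∂μ :=
        integral_congr_ae (ae_restrict_of_ae
          ((integral_smul_bayesEstimate hk hk0 hν G).mono fun _ hy => hy.symm))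
    _ = ∫ y in B, bayesEstimate π k G y ∂ν.map Prod.fst := by
        rw [hν, map_fst_withDensity_prod μ π hk.ennreal_ofReal,
          setIntegral_withDensity_eq_setIntegral_toReal_smul
            hk.ennreal_ofReal.lintegral_prod_right'
            (ae_restrict_of_ae (ae_lintegral_ofReal_lt_top hk hν)) _ hB]
        simp only [toReal_lintegral_ofReal_eq_integral hk hk0]

end Bayes

theorem conditioned_expectation_formula_general
    {Ξ Θ : Type*} [MeasurableSpace Ξ] [MeasurableSpace Θ]
    (PΞ : Measure Ξ) (PΘ : Measure Θ)
    [IsProbabilityMeasure PΞ] [IsProbabilityMeasure PΘ]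
    {m d : ℕ}
    (Y : Ξ → EuclideanSpace ℝ (Fin m)) (hY : Measurable Y)
    (E : Θ → EuclideanSpace ℝ (Fin m)) (hE : Measurable E)
    (Einv : EuclideanSpace ℝ (Fin m) → Θ) (hEinvMeas : Measurable Einv)
    (hEinvLeft : Function.LeftInverse Einv E)
    (fE : EuclideanSpace ℝ (Fin m) → ℝ) (hfE0 : ∀ y, 0 ≤ fE y)
    (hfEcont : Continuous fE)
    (hfEdens : Measure.map E PΘ = volume.withDensity (fun y => ENNReal.ofReal (fE y)))
    (X : Ξ × Θ → EuclideanSpace ℝ (Fin d))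
    (hXint : Integrable X (PΞ.prod PΘ))
    (Z : Ξ × Θ → EuclideanSpace ℝ (Fin m))
    (hZ : Z = fun p => Y p.1 + E p.2)
    (Φ : EuclideanSpace ℝ (Fin m) → EuclideanSpace ℝ (Fin d))
    (hΦ : Φ = fun y =>
      if 0 < ∫ ξ, fE (y - Y ξ) ∂PΞ then
        (∫ ξ, fE (y - Y ξ) ∂PΞ)⁻¹ •
          ∫ ξ, fE (y - Y ξ) • X (ξ, Einv (y - Y ξ)) ∂PΞ
      else 0) :
    Integrable Φ (Measure.map Z (PΞ.prod PΘ)) ∧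
    ∀ B : Set (EuclideanSpace ℝ (Fin m)), MeasurableSet B →
      ∫ ω in Z ⁻¹' B, X ω ∂(PΞ.prod PΘ)
        = ∫ ω in Z ⁻¹' B, Φ (Z ω) ∂(PΞ.prod PΘ) := by
  set S : Ξ × Θ → EuclideanSpace ℝ (Fin m) × Ξ := fun p => (Y p.1 + E p.2, p.1)
  set Ψ : EuclideanSpace ℝ (Fin m) × Ξ → Ξ × Θ := fun q => (q.2, Einv (q.1 - Y q.2))
  have hS : Measurable S := by fun_prop
  have hΨ : Measurable Ψ := by fun_prop
  have hΨS : LeftInverse Ψ S := fun p => by simp [S, Ψ, hEinvLeft p.2]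
  have hk : Measurable fun q : EuclideanSpace ℝ (Fin m) × Ξ => fE (q.1 - Y q.2) := by fun_prop
  have hlaw : (PΞ.prod PΘ).map S =
      (volume.prod PΞ).withDensity fun q => ENNReal.ofReal (fE (q.1 - Y q.2)) :=
    (map_add_prod_eq_withDensity volume PΞ PΘ hY hE hfEcont.measurable.ennreal_ofReal hfEdens :)
  have hZS : (PΞ.prod PΘ).map Z = ((PΞ.prod PΘ).map S).map Prod.fst := by
    rw [Measure.map_map measurable_fst hS, hZ]
    rfl
  have hXΨ : Integrable (X ∘ Ψ) ((PΞ.prod PΘ).map S) :=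
    ((measurePreserving_leftInverse_map hS hΨ hΨS).integrable_comp hXint.1).2 hXint
  have hΦ' : Φ = bayesEstimate PΞ (fun q => fE (q.1 - Y q.2)) (X ∘ Ψ) := hΦ
  have hΦint : Integrable Φ ((PΞ.prod PΘ).map Z) :=
    hZS ▸ hΦ' ▸ integrable_bayesEstimate hk (fun _ => hfE0 _) hlaw hXΨ
  refine ⟨hΦint, fun B hB => ?_⟩
  have hZm : Measurable Z := hZ ▸ by fun_prop
  calc ∫ ω in Z ⁻¹' B, X ω ∂(PΞ.prod PΘ)
      = ∫ q in Prod.fst ⁻¹' B, X (Ψ q) ∂(PΞ.prod PΘ).map S := by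
        rw [hZ]
        exact setIntegral_preimage_of_leftInverse hS hΨ hΨS hXint.1 (measurable_fst hB)
    _ = ∫ y in B, Φ y ∂(PΞ.prod PΘ).map Z := by
        rw [hZS, hΦ']
        exact setIntegral_preimage_fst_eq_setIntegral_bayesEstimate hk (fun _ => hfE0 _) hlaw
          hXΨ hB
    _ = ∫ ω in Z ⁻¹' B, Φ (Z ω) ∂(PΞ.prod PΘ) := setIntegral_map hB hΦint.1 hZm.aemeasurable

/-- Conditioned expectation (Theorem 1 of the paper): for an integrable random variable
`X : Ξ × Θ → ℝ^d` and the measurement `Z(ξ,θ) = Y(ξ) + E(θ)` with bijective error `E`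
having continuous density `f_E`, the function
`Φ(y) = (∫_Ξ X(ξ, E⁻¹(y − Y(ξ))) f_E(y − Y(ξ)) dP_Ξ) / (∫_Ξ f_E(y − Y(ξ)) dP_Ξ)`
(set to `0` where the denominator is not positive) is a version of the conditional
expectation of `X` given `Z`. -/
theorem conditioned_expectation_formula
    {Ξ Θ : Type*} [MeasurableSpace Ξ] [MeasurableSpace Θ]
    [TopologicalSpace Θ] [BorelSpace Θ]
    (PΞ : Measure Ξ) (PΘ : Measure Θ)
    [IsProbabilityMeasure PΞ] [IsProbabilityMeasure PΘ]
    {m d : ℕ}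
    (Y : Ξ → EuclideanSpace ℝ (Fin m)) (hY : Measurable Y)
    (E : Θ → EuclideanSpace ℝ (Fin m)) (hE : Measurable E)
    (Einv : EuclideanSpace ℝ (Fin m) → Θ) (hEinvMeas : Measurable Einv)
    (hEinvLeft : Function.LeftInverse Einv E)
    (hEinvRight : Function.RightInverse Einv E)
    (fE : EuclideanSpace ℝ (Fin m) → ℝ) (hfE0 : ∀ y, 0 ≤ fE y)
    (hfEcont : Continuous fE)
    (hfEdens : Measure.map E PΘ = volume.withDensity (fun y => ENNReal.ofReal (fE y)))
    (X : Ξ × Θ → EuclideanSpace ℝ (Fin d))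
    (hXint : Integrable X (PΞ.prod PΘ))
    (hXcont : ∀ ξ : Ξ, Continuous fun y => X (ξ, Einv y))
    (Z : Ξ × Θ → EuclideanSpace ℝ (Fin m))
    (hZ : Z = fun p => Y p.1 + E p.2)
    (Φ : EuclideanSpace ℝ (Fin m) → EuclideanSpace ℝ (Fin d))
    (hΦ : Φ = fun y =>
      if 0 < ∫ ξ, fE (y - Y ξ) ∂PΞ then
        (∫ ξ, fE (y - Y ξ) ∂PΞ)⁻¹ •
          ∫ ξ, fE (y - Y ξ) • X (ξ, Einv (y - Y ξ)) ∂PΞ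
      else 0) :
    Integrable Φ (Measure.map Z (PΞ.prod PΘ)) ∧
    ∀ B : Set (EuclideanSpace ℝ (Fin m)), MeasurableSet B →
      ∫ ω in Z ⁻¹' B, X ω ∂(PΞ.prod PΘ)
        = ∫ ω in Z ⁻¹' B, Φ (Z ω) ∂(PΞ.prod PΘ) :=
  conditioned_expectation_formula_general PΞ PΘ Y hY E hE Einv hEinvMeas hEinvLeft fE hfE0 hfEcont
    hfEdens X hXint Z hZ Φ hΦ
end

section
/- Let X : Ξ → ℝ^d be such that (ξ,θ) ↦ X(ξ) is integrable with respect to P = P_Ξ ⊗ P_Θ (i.e. X is P_Ξ-integrable), and suppose the density f_E of E_*P_Θ is continuous. Define Φ : ℝ^m → ℝ^d by Φ(y) = (∫_Ξ X(ξ) · f_E(y − Y(ξ)) dP_Ξ(ξ)) / (∫_Ξ f_E(y − Y(ξ)) dP_Ξ(ξ)) whenever the denominator is positive (and Φ(y) = 0 otherwise). Then Φ is a version of the conditional expectation of the random variable (ξ,θ) ↦ X(ξ) given the measurement Z, i.e. Φ is Z_*P-integrable and ∫_{Z⁻¹(B)} X(ξ) dP(ξ,θ) = ∫_{Z⁻¹(B)}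 Φ(Z(ξ,θ)) dP(ξ,θ) for every Borel set B ⊆ ℝ^m. -/
/-!
Write `ρ(ξ, y) = f_E(y - Y ξ)`. Translating the noise translates its density, so the pair
`(ξ, Z)` has law `P_Ξ ⊗ λ` with density `ρ`, `λ` the Lebesgue measure. By Fubini both sides
of the defining identity become Lebesgue integrals over `B`: of `N(y) = ∫ ρ(ξ, y) X ξ dP_Ξ`
on the left and of `g(y) Φ(y)`, `g(y) = ∫ ρ(ξ, y) dP_Ξ`, on the right. Now `g Φ = N` wherever
`ρ(·, y)` is integrable, which is almost everywhere because `∫ g dλ = 1`; if `g(y) = 0` the weight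
vanishes `P_Ξ`-a.e. and so does `N(y)`. The same change of variables together with
`g ‖Φ‖ ≤ ∫ ρ ‖X‖ dP_Ξ` bounds `∫ ‖Φ ∘ Z‖ dP` by `∫ ‖X‖ dP_Ξ`.
-/

open MeasureTheory
open scoped ENNReal

theorem map_const_add_withDensity {G : Type*} [MeasurableSpace G] [AddCommGroup G]
    [MeasurableAdd G] [MeasurableSub G] (μ : Measure G) [μ.IsAddLeftInvariant] (c : G)
    {f : G → ℝ≥0∞} (hf : Measurable f) :
    (μ.withDensity f).map (c + ·) = μ.withDensity fun y => f (y - c) := by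
  refine Measure.ext_of_lintegral _ fun h hh => ?_
  have hfc : Measurable fun y => f (y - c) := hf.comp (measurable_sub_const c)
  have hhc : Measurable fun y => h (c + y) := hh.comp (measurable_const_add c)
  rw [lintegral_map hh (measurable_const_add c), lintegral_withDensity_eq_lintegral_mul _ hf hhc,
    lintegral_withDensity_eq_lintegral_mul _ hfc hh]
  conv_rhs => rw [← lintegral_add_left_eq_self _ c]
  simp only [Pi.mul_apply, add_sub_cancel_left]

section WeightedAverage

variable {Ξ W : Type*} [MeasurableSpace Ξ] [NormedAddCommGroup W] [NormedSpace ℝ W]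
  {P : Measure Ξ} {k : Ξ → ℝ} {X : Ξ → W}

noncomputable def weightedAverage (P : Measure Ξ) (k : Ξ → ℝ) (X : Ξ → W) : W :=
  if 0 < ∫ ξ, k ξ ∂P then (∫ ξ, k ξ ∂P)⁻¹ • ∫ ξ, k ξ • X ξ ∂P else 0

theorem integral_smul_weightedAverage (hk0 : 0 ≤ᵐ[P] k) (hk : Integrable k P) :
    (∫ ξ, k ξ ∂P) • weightedAverage P k X = ∫ ξ, k ξ • X ξ ∂P := by
  unfold weightedAverage
  split_ifs with hpos
  · exact smul_inv_smul₀ hpos.ne' _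
  have hk_zero : k =ᵐ[P] 0 := (integral_eq_zero_iff_of_nonneg_ae hk0 hk).1
    (le_antisymm (not_lt.1 hpos) (integral_nonneg_of_ae hk0))
  rw [smul_zero, integral_eq_zero_of_ae]
  filter_upwards [hk_zero] with ξ hξ
  simp [hξ]

theorem lintegral_mul_enorm_weightedAverage_le (hk0 : 0 ≤ᵐ[P] k) :
    ∫⁻ ξ, ENNReal.ofReal (k ξ) * ‖weightedAverage P k X‖ₑ ∂P
      ≤ ∫⁻ ξ, ENNReal.ofReal (k ξ) * ‖X ξ‖ₑ ∂P := by
  rw [lintegral_mul_const' _ _ enorm_ne_top]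
  unfold weightedAverage
  split_ifs with hpos
  swap
  · simp
  have hk : Integrable k P := by
    by_contra h
    simp [integral_undef h] at hpos
  calc (∫⁻ ξ, ENNReal.ofReal (k ξ) ∂P) * ‖(∫ ξ, k ξ ∂P)⁻¹ • ∫ ξ, k ξ • X ξ ∂P‖ₑ
      = ‖∫ ξ, k ξ • X ξ ∂P‖ₑ := by
        rw [← ofReal_integral_eq_lintegral_ofReal hk hk0, enorm_smul, ← mul_assoc,
          Real.enorm_eq_ofReal (inv_nonneg.2 hpos.le), ← ENNReal.ofReal_mul hpos.le,
          mul_inv_cancel₀ hpos.ne', ENNReal.ofReal_one, one_mul]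
    _ ≤ ∫⁻ ξ, ‖k ξ • X ξ‖ₑ ∂P := enorm_integral_le_lintegral_enorm _
    _ = ∫⁻ ξ, ENNReal.ofReal (k ξ) * ‖X ξ‖ₑ ∂P := by
        refine lintegral_congr_ae ?_
        filter_upwards [hk0] with ξ hξ
        rw [enorm_smul, Real.enorm_eq_ofReal hξ]

theorem stronglyMeasurable_weightedAverage {G : Type*} [MeasurableSpace G] [SFinite P]
    {k : G → Ξ → ℝ} (hk : Measurable (Function.uncurry k)) (hX : AEStronglyMeasurable X P) :
    StronglyMeasurable fun y => weightedAverage P (k y) X := by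
  have hX' : ∀ y, weightedAverage P (k y) X = weightedAverage P (k y) (hX.mk X) := fun y => by
    rw [weightedAverage, weightedAverage,
      integral_congr_ae (hX.ae_eq_mk.mono fun ξ hξ => congrArg (k y ξ • ·) hξ)]
  simp_rw [hX']
  have hg : StronglyMeasurable fun y => ∫ ξ, k y ξ ∂P :=
    hk.stronglyMeasurable.integral_prod_right
  have hN : StronglyMeasurable fun y => ∫ ξ, k y ξ • hX.mk X ξ ∂P :=
    (hk.stronglyMeasurable.smul
      (hX.stronglyMeasurable_mk.comp_measurable measurable_snd)).integral_prod_right'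
  exact .ite (measurableSet_lt measurable_const hg.measurable)
    (hg.measurable.inv.stronglyMeasurable.smul hN) stronglyMeasurable_const

end WeightedAverage

section AdditiveNoise

variable {Ξ Θ G : Type*} [MeasurableSpace Ξ] [MeasurableSpace Θ] [MeasurableSpace G]
  [AddCommGroup G] [MeasurableAdd₂ G] [MeasurableSub₂ G]
  {PΞ : Measure Ξ} {PΘ : Measure Θ} {μ : Measure G} [SFinite μ]
  [μ.IsAddLeftInvariant] {Y : Ξ → G} {E : Θ → G}

theorem map_prodMk_add_eq_withDensity [SFinite PΘ] (hY : Measurable Y) (hE : Measurable E)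
    {f : G → ℝ≥0∞} (hf : Measurable f) (hEf : PΘ.map E = μ.withDensity f) :
    (PΞ.prod PΘ).map (fun ω => (ω.1, Y ω.1 + E ω.2))
      = (PΞ.prod μ).withDensity fun p => f (p.2 - Y p.1) := by
  refine Measure.ext_of_lintegral _ fun h hh => ?_
  have hρ : Measurable fun p : Ξ × G => f (p.2 - Y p.1) := by fun_prop
  have hT : Measurable fun ω : Ξ × Θ => (ω.1, Y ω.1 + E ω.2) := by fun_prop
  rw [lintegral_map hh hT, lintegral_withDensity_eq_lintegral_mul _ hρ hh,
    lintegral_prod _ (by fun_prop), lintegral_prod _ (by fun_prop)]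
  refine lintegral_congr fun ξ => ?_
  have hhξ : Measurable fun y => h (ξ, y) := hh.comp measurable_prodMk_left
  calc ∫⁻ θ, h (ξ, Y ξ + E θ) ∂PΘ = ∫⁻ y, h (ξ, y) ∂((PΘ.map E).map (Y ξ + ·)) := by
        rw [lintegral_map hhξ (measurable_const_add _), lintegral_map (by fun_prop) hE]
    _ = ∫⁻ y, f (y - Y ξ) * h (ξ, y) ∂μ := by
        rw [hEf, map_const_add_withDensity μ (Y ξ) hf,
          lintegral_withDensity_eq_lintegral_mul _ (by fun_prop) hhξ]
        rfl

theorem lintegral_comp_add_noise [SFinite PΞ] [SFinite PΘ] (hY : Measurable Y)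
    (hE : Measurable E) {f : G → ℝ≥0∞} (hf : Measurable f) (hEf : PΘ.map E = μ.withDensity f)
    {h : Ξ × G → ℝ≥0∞} (hh : AEMeasurable h (PΞ.prod μ)) :
    ∫⁻ ω, h (ω.1, Y ω.1 + E ω.2) ∂(PΞ.prod PΘ) = ∫⁻ y, ∫⁻ ξ, f (y - Y ξ) * h (ξ, y) ∂PΞ ∂μ := by
  have hT : Measurable fun ω : Ξ × Θ => (ω.1, Y ω.1 + E ω.2) := by fun_prop
  have hρ : Measurable fun p : Ξ × G => f (p.2 - Y p.1) := by fun_prop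
  have hh' : AEMeasurable h ((PΞ.prod PΘ).map fun ω => (ω.1, Y ω.1 + E ω.2)) := by
    rw [map_prodMk_add_eq_withDensity hY hE hf hEf]
    exact hh.mono_ac (withDensity_absolutelyContinuous _ _)
  rw [← lintegral_map' hh' hT.aemeasurable, map_prodMk_add_eq_withDensity hY hE hf hEf,
    lintegral_withDensity_eq_lintegral_mul₀ hρ.aemeasurable hh,
    lintegral_prod_symm _ (hρ.aemeasurable.mul hh)]
  rfl

theorem setIntegral_preimage_add_noise {W : Type*} [NormedAddCommGroup W] [NormedSpace ℝ W]
    [SFinite PΞ] [SFinite PΘ] (hY : Measurable Y) (hE : Measurable E) {f : G → ℝ}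
    (hf0 : ∀ y, 0 ≤ f y) (hf : Measurable f)
    (hEf : PΘ.map E = μ.withDensity fun y => ENNReal.ofReal (f y))
    {F : Ξ × G → W} (hF : AEStronglyMeasurable F (PΞ.prod μ))
    (hFi : Integrable (fun ω => F (ω.1, Y ω.1 + E ω.2)) (PΞ.prod PΘ))
    {B : Set G} (hB : MeasurableSet B) :
    ∫ ω in (fun ω => Y ω.1 + E ω.2) ⁻¹' B, F (ω.1, Y ω.1 + E ω.2) ∂(PΞ.prod PΘ)
      = ∫ y in B, ∫ ξ, f (y - Y ξ) • F (ξ, y) ∂PΞ ∂μ := by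
  set T : Ξ × Θ → Ξ × G := fun ω => (ω.1, Y ω.1 + E ω.2)
  have hT : Measurable T := by fun_prop
  have hρ : Measurable fun p : Ξ × G => (f (p.2 - Y p.1)).toNNReal := by fun_prop
  have hlaw : (PΞ.prod PΘ).map T = (PΞ.prod μ).withDensity fun p => (f (p.2 - Y p.1)).toNNReal :=
    (map_prodMk_add_eq_withDensity hY hE hf.ennreal_ofReal hEf).trans rfl
  have hF' : AEStronglyMeasurable F ((PΞ.prod PΘ).map T) := by
    rw [hlaw]; exact hF.mono_ac (withDensity_absolutelyContinuous _ _)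
  have hrestrict : (PΞ.prod μ).restrict (Set.univ ×ˢ B) = PΞ.prod (μ.restrict B) := by
    rw [← Measure.prod_restrict, Measure.restrict_univ]
  have hsmul : ∀ p : Ξ × G, (f (p.2 - Y p.1)).toNNReal • F p = f (p.2 - Y p.1) • F p :=
    fun p => by rw [NNReal.smul_def, Real.coe_toNNReal _ (hf0 _)]
  have hint : Integrable (fun p => f (p.2 - Y p.1) • F p) (PΞ.prod (μ.restrict B)) := by
    rw [← hrestrict]
    refine Integrable.restrict ?_
    simp_rw [← hsmul]
    rw [← integrable_withDensity_iff_integrable_smul hρ, ← hlaw]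
    exact (integrable_map_measure hF' hT.aemeasurable).2 hFi
  calc ∫ ω in (fun ω => Y ω.1 + E ω.2) ⁻¹' B, F (ω.1, Y ω.1 + E ω.2) ∂(PΞ.prod PΘ)
      = ∫ p in Set.univ ×ˢ B, F p ∂(PΞ.prod PΘ).map T := by
        rw [setIntegral_map (MeasurableSet.univ.prod hB) hF' hT.aemeasurable]
        simp only [T, Set.mk_preimage_prod, Set.preimage_univ, Set.univ_inter]
    _ = ∫ p, f (p.2 - Y p.1) • F p ∂(PΞ.prod (μ.restrict B)) := by
        rw [hlaw, setIntegral_withDensity_eq_setIntegral_smul hρ _ (MeasurableSet.univ.prod hB),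
          hrestrict]
        simp_rw [hsmul]
    _ = ∫ y in B, ∫ ξ, f (y - Y ξ) • F (ξ, y) ∂PΞ ∂μ := integral_prod_symm _ hint

theorem ae_integrable_comp_sub [IsFiniteMeasure PΞ] [IsFiniteMeasure PΘ] (hY : Measurable Y)
    (hE : Measurable E) {f : G → ℝ} (hf0 : ∀ y, 0 ≤ f y) (hf : Measurable f)
    (hEf : PΘ.map E = μ.withDensity fun y => ENNReal.ofReal (f y)) :
    ∀ᵐ y ∂μ, Integrable (fun ξ => f (y - Y ξ)) PΞ := by
  have htot : ∫⁻ y, ∫⁻ ξ, ENNReal.ofReal (f (y - Y ξ)) ∂PΞ ∂μ ≠ ∞ := by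
    have := lintegral_comp_add_noise (PΞ := PΞ) hY hE hf.ennreal_ofReal hEf (h := 1)
      aemeasurable_const
    simp only [Pi.one_apply, mul_one, lintegral_one] at this
    exact this ▸ measure_ne_top _ _
  have hm : Measurable fun p : G × Ξ => ENNReal.ofReal (f (p.1 - Y p.2)) := by fun_prop
  filter_upwards [ae_lt_top' hm.lintegral_prod_right'.aemeasurable htot] with y hy
  exact ⟨(hf.comp (measurable_const.sub hY)).aestronglyMeasurable,
    (hasFiniteIntegral_iff_ofReal (ae_of_all _ fun ξ => hf0 _)).2 hy⟩

theorem integrable_weightedAverage_comp_add_noise [SFinite PΞ] [IsFiniteMeasure PΘ] {W : Type*}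
    [NormedAddCommGroup W] [NormedSpace ℝ W] (hY : Measurable Y) (hE : Measurable E) {f : G → ℝ}
    (hf0 : ∀ y, 0 ≤ f y) (hf : Measurable f)
    (hEf : PΘ.map E = μ.withDensity fun y => ENNReal.ofReal (f y))
    {X : Ξ → W} (hX : Integrable X PΞ) :
    Integrable (fun ω => weightedAverage PΞ (fun ξ => f (Y ω.1 + E ω.2 - Y ξ)) X)
      (PΞ.prod PΘ) := by
  set Φ : G → W := fun y => weightedAverage PΞ (fun ξ => f (y - Y ξ)) X
  have hΦ : StronglyMeasurable Φ := stronglyMeasurable_weightedAverage (by fun_prop) hX.1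
  refine ⟨(hΦ.comp_measurable (by fun_prop)).aestronglyMeasurable, ?_⟩
  calc ∫⁻ ω, ‖Φ (Y ω.1 + E ω.2)‖ₑ ∂(PΞ.prod PΘ)
      = ∫⁻ y, ∫⁻ ξ, ENNReal.ofReal (f (y - Y ξ)) * ‖Φ y‖ₑ ∂PΞ ∂μ :=
        lintegral_comp_add_noise hY hE hf.ennreal_ofReal hEf (h := fun p => ‖Φ p.2‖ₑ)
          hΦ.aestronglyMeasurable.enorm.comp_snd
    _ ≤ ∫⁻ y, ∫⁻ ξ, ENNReal.ofReal (f (y - Y ξ)) * ‖X ξ‖ₑ ∂PΞ ∂μ :=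
        lintegral_mono fun _ => lintegral_mul_enorm_weightedAverage_le (ae_of_all _ fun _ => hf0 _)
    _ = ∫⁻ ω, ‖X ω.1‖ₑ ∂(PΞ.prod PΘ) :=
        (lintegral_comp_add_noise hY hE hf.ennreal_ofReal hEf (h := fun p => ‖X p.1‖ₑ)
          hX.1.enorm.comp_fst).symm
    _ < ∞ := (hX.comp_fst PΘ).2

end AdditiveNoise

/-- Conditioned expectation, simplified case (Corollary 1 of the paper): for a random
variable `X` depending only on the parameter domain `Ξ` and the measurement
`Z(ξ,θ) = Y(ξ) + E(θ)` with error density `f_E` continuous, the function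
`Φ(y) = (∫_Ξ X(ξ) f_E(y − Y(ξ)) dP_Ξ) / (∫_Ξ f_E(y − Y(ξ)) dP_Ξ)`
(set to `0` where the denominator is not positive) is a version of the conditional
expectation of `(ξ,θ) ↦ X(ξ)` given `Z`. -/
theorem conditioned_expectation_formula_parameter_only
    {Ξ Θ : Type*} [MeasurableSpace Ξ] [MeasurableSpace Θ]
    (PΞ : Measure Ξ) (PΘ : Measure Θ)
    [IsProbabilityMeasure PΞ] [IsProbabilityMeasure PΘ]
    {m d : ℕ}
    (Y : Ξ → EuclideanSpace ℝ (Fin m)) (hY : Measurable Y)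
    (E : Θ → EuclideanSpace ℝ (Fin m)) (hE : Measurable E)
    (fE : EuclideanSpace ℝ (Fin m) → ℝ) (hfE0 : ∀ y, 0 ≤ fE y)
    (hfEcont : Continuous fE)
    (hfEdens : Measure.map E PΘ = volume.withDensity (fun y => ENNReal.ofReal (fE y)))
    (X : Ξ → EuclideanSpace ℝ (Fin d))
    (hXint : Integrable X PΞ)
    (Z : Ξ × Θ → EuclideanSpace ℝ (Fin m))
    (hZ : Z = fun p => Y p.1 + E p.2)
    (Φ : EuclideanSpace ℝ (Fin m) → EuclideanSpace ℝ (Fin d))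
    (hΦ : Φ = fun y =>
      if 0 < ∫ ξ, fE (y - Y ξ) ∂PΞ then
        (∫ ξ, fE (y - Y ξ) ∂PΞ)⁻¹ • ∫ ξ, fE (y - Y ξ) • X ξ ∂PΞ
      else 0) :
    Integrable Φ (Measure.map Z (PΞ.prod PΘ)) ∧
    ∀ B : Set (EuclideanSpace ℝ (Fin m)), MeasurableSet B →
      ∫ ω in Z ⁻¹' B, X ω.1 ∂(PΞ.prod PΘ)
        = ∫ ω in Z ⁻¹' B, Φ (Z ω) ∂(PΞ.prod PΘ) := by
  have hfE := hfEcont.measurable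
  replace hΦ : Φ = fun y => weightedAverage PΞ (fun ξ => fE (y - Y ξ)) X := hΦ
  subst hZ hΦ
  have hΦm : StronglyMeasurable fun y => weightedAverage PΞ (fun ξ => fE (y - Y ξ)) X :=
    stronglyMeasurable_weightedAverage (by fun_prop) hXint.1
  have hΦZ := integrable_weightedAverage_comp_add_noise hY hE hfE0 hfE hfEdens hXint
  refine ⟨(integrable_map_measure hΦm.aestronglyMeasurable (by fun_prop)).2 hΦZ, fun B hB => ?_⟩
  calc ∫ ω in (fun p => Y p.1 + E p.2) ⁻¹' B, X ω.1 ∂(PΞ.prod PΘ)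
      = ∫ y in B, ∫ ξ, fE (y - Y ξ) • X ξ ∂PΞ :=
        setIntegral_preimage_add_noise hY hE hfE0 hfE hfEdens (F := fun p => X p.1)
          (hXint.1.comp_quasiMeasurePreserving Measure.quasiMeasurePreserving_fst)
          (hXint.comp_fst PΘ) hB
    _ = ∫ y in B, ∫ ξ, fE (y - Y ξ) • weightedAverage PΞ (fun ξ => fE (y - Y ξ)) X ∂PΞ := by
        refine setIntegral_congr_ae hB ?_
        filter_upwards [ae_integrable_comp_sub (PΞ := PΞ) hY hE hfE0 hfE hfEdens] with y hy _
        rw [integral_smul_const, integral_smul_weightedAverage (ae_of_all _ fun ξ => hfE0 _) hy]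
    _ = _ := (setIntegral_preimage_add_noise hY hE hfE0 hfE hfEdens
          (F := fun p => weightedAverage PΞ (fun ξ => fE (p.2 - Y ξ)) X)
          (hΦm.comp_measurable measurable_snd).aestronglyMeasurable hΦZ hB).symm
end

section
/- Let Q₀ : Ξ → ℝ^n and Y_Q : ℝ^n → ℝ^m be measurable, define Q : Ω → ℝ^n by Q(ξ,θ) = Q₀(ξ) and the measurement Z : Ω → ℝ^m by Z(ξ,θ) = Y_Q(Q₀(ξ)) + E(θ). Then for all Borel sets A ⊆ ℝ^n and B ⊆ ℝ^m: P(Q⁻¹(A) ∩ Z⁻¹(B)) = ∫_A (∫_B f_E(y − Y_Q(q)) dy) d((Q₀)_*P_Ξ)(q), where the inner integral is with respect to Lebesgue measure on ℝ^m. -/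
/-!
By Tonelli, the joint probability is the integral, over `q ∈ A` against the law of `Q₀`, of
`P_Θ(Y_Q(q) + E ∈ B)`; translating the density of `E` by `Y_Q(q)` turns this probability into
`∫_B f_E(y − Y_Q(q)) dy`, which is finite, so it is the `ofReal` of the Bochner integral.
-/

open MeasureTheory

theorem withDensity_apply_preimage_const_add {G : Type*} [MeasurableSpace G] [AddCommGroup G]
    [MeasurableAdd G] (μ : Measure G) [μ.IsAddRightInvariant] {g : G → ENNReal}
    (hg : Measurable g) (c : G) {B : Set G} (hB : MeasurableSet B) :
    μ.withDensity g ((c + ·) ⁻¹' B) = ∫⁻ y in B, g (y - c) ∂μ := by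
  have hpre : (· - c) ⁻¹' ((c + ·) ⁻¹' B) = B := by
    ext y; simp
  have h := (measurePreserving_sub_right μ c).setLIntegral_comp_preimage
    (measurable_const_add c hB) hg
  rw [hpre] at h
  rw [withDensity_apply _ (measurable_const_add c hB), h]

theorem ofReal_setIntegral_eq_setLIntegral_of_ne_top {α : Type*} [MeasurableSpace α]
    {μ : Measure α} {f : α → ℝ} (hf : AEStronglyMeasurable f μ) (hf0 : ∀ x, 0 ≤ f x)
    (s : Set α) (hfin : ∫⁻ x in s, ENNReal.ofReal (f x) ∂μ ≠ ⊤) :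
    ENNReal.ofReal (∫ x in s, f x ∂μ) = ∫⁻ x in s, ENNReal.ofReal (f x) ∂μ := by
  rw [integral_eq_lintegral_of_nonneg_ae (.of_forall hf0) hf.restrict, ENNReal.ofReal_toReal hfin]

theorem measure_preimage_const_add_eq_ofReal_setIntegral {Θ G : Type*} [MeasurableSpace Θ]
    [MeasurableSpace G] [AddCommGroup G] [MeasurableAdd G] [MeasurableSub G]
    (μ : Measure G) [μ.IsAddRightInvariant]
    (P : Measure Θ) [IsFiniteMeasure P] {E : Θ → G} (hE : Measurable E)
    {f : G → ℝ} (hf : Measurable f) (hf0 : ∀ y, 0 ≤ f y)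
    (hdens : P.map E = μ.withDensity (fun y => ENNReal.ofReal (f y)))
    (c : G) {B : Set G} (hB : MeasurableSet B) :
    P ((fun θ => c + E θ) ⁻¹' B) = ENNReal.ofReal (∫ y in B, f (y - c) ∂μ) := by
  have hlin : P ((fun θ => c + E θ) ⁻¹' B) = ∫⁻ y in B, ENNReal.ofReal (f (y - c)) ∂μ := by
    rw [← withDensity_apply_preimage_const_add μ hf.ennreal_ofReal c hB, ← hdens,
      Measure.map_apply hE (measurable_const_add c hB)]
    rfl
  rw [hlin]
  exact (ofReal_setIntegral_eq_setLIntegral_of_ne_top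
    (hf.comp (measurable_sub_const c)).aestronglyMeasurable (fun y => hf0 _) B
    (hlin ▸ measure_ne_top P _)).symm

theorem prod_preimage_fst_inter_eq_setLIntegral_map {α β X Y : Type*} [MeasurableSpace α]
    [MeasurableSpace β] [MeasurableSpace X] [MeasurableSpace Y]
    (μ : Measure α) (ν : Measure β) [SFinite ν] {f : α → X} (hf : Measurable f)
    {g : X × β → Y} (hg : Measurable g) {A : Set X} {B : Set Y}
    (hA : MeasurableSet A) (hB : MeasurableSet B) :
    (μ.prod ν) ((fun p => f p.1) ⁻¹' A ∩ (fun p => g (f p.1, p.2)) ⁻¹' B)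
      = ∫⁻ x in A, ν ((fun b => g (x, b)) ⁻¹' B) ∂(μ.map f) := by
  set S : Set (X × β) := Prod.fst ⁻¹' A ∩ g ⁻¹' B
  have hS : MeasurableSet S := (measurable_fst hA).inter (hg hB)
  have hsection (x : X) :
      ν (Prod.mk x ⁻¹' S) = A.indicator (fun q => ν ((fun b => g (q, b)) ⁻¹' B)) x := by
    by_cases hx : x ∈ A <;> simp [S, hx, Set.preimage]
  have hjoint : (fun p => f p.1) ⁻¹' A ∩ (fun p => g (f p.1, p.2)) ⁻¹' B
      = Prod.map f id ⁻¹' S := rfl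
  rw [hjoint, Measure.prod_apply (hS.preimage (hf.prodMap measurable_id)), ← lintegral_indicator hA,
    ← funext hsection, lintegral_map (measurable_measure_prodMk_left hS) hf]
  rfl

theorem joint_probability_additive_error_general
    {Ξ Θ : Type*} [MeasurableSpace Ξ] [MeasurableSpace Θ]
    (PΞ : Measure Ξ) (PΘ : Measure Θ)
    [IsProbabilityMeasure PΘ]
    {n m : ℕ}
    (Q₀ : Ξ → EuclideanSpace ℝ (Fin n)) (hQ₀ : Measurable Q₀)
    (YQ : EuclideanSpace ℝ (Fin n) → EuclideanSpace ℝ (Fin m)) (hYQ : Measurable YQ)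
    (E : Θ → EuclideanSpace ℝ (Fin m)) (hE : Measurable E)
    (fE : EuclideanSpace ℝ (Fin m) → ℝ) (hfEmeas : Measurable fE) (hfE0 : ∀ y, 0 ≤ fE y)
    (hfEdens : Measure.map E PΘ = volume.withDensity (fun y => ENNReal.ofReal (fE y)))
    (Q : Ξ × Θ → EuclideanSpace ℝ (Fin n)) (hQ : Q = fun p => Q₀ p.1)
    (Z : Ξ × Θ → EuclideanSpace ℝ (Fin m)) (hZ : Z = fun p => YQ (Q₀ p.1) + E p.2) :
    ∀ (A : Set (EuclideanSpace ℝ (Fin n))) (B : Set (EuclideanSpace ℝ (Fin m))),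
      MeasurableSet A → MeasurableSet B →
      (PΞ.prod PΘ) (Q ⁻¹' A ∩ Z ⁻¹' B)
        = ∫⁻ q in A, ENNReal.ofReal (∫ y in B, fE (y - YQ q)) ∂(Measure.map Q₀ PΞ) := by
  intro A B hA hB
  subst hQ hZ
  rw [prod_preimage_fst_inter_eq_setLIntegral_map PΞ PΘ hQ₀
    (g := fun p => YQ p.1 + E p.2) (by fun_prop) hA hB]
  exact setLIntegral_congr_fun hA fun q _ =>
    measure_preimage_const_add_eq_ofReal_setIntegral volume PΘ hE hfEmeas hfE0 hfEdens (YQ q) hB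

/-- For the parameter `Q(ξ,θ) = Q₀(ξ)` and the measurement with additive error
`Z(ξ,θ) = Y_Q(Q₀(ξ)) + E(θ)` on the product space, the joint probability satisfies
`P(Q⁻¹(A) ∩ Z⁻¹(B)) = ∫_A (∫_B f_E(y − Y_Q(q)) dy) d((Q₀)_*P_Ξ)(q)`. -/
theorem joint_probability_additive_error
    {Ξ Θ : Type*} [MeasurableSpace Ξ] [MeasurableSpace Θ]
    (PΞ : Measure Ξ) (PΘ : Measure Θ)
    [IsProbabilityMeasure PΞ] [IsProbabilityMeasure PΘ]
    {n m : ℕ}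
    (Q₀ : Ξ → EuclideanSpace ℝ (Fin n)) (hQ₀ : Measurable Q₀)
    (YQ : EuclideanSpace ℝ (Fin n) → EuclideanSpace ℝ (Fin m)) (hYQ : Measurable YQ)
    (E : Θ → EuclideanSpace ℝ (Fin m)) (hE : Measurable E)
    (fE : EuclideanSpace ℝ (Fin m) → ℝ) (hfEmeas : Measurable fE) (hfE0 : ∀ y, 0 ≤ fE y)
    (hfEdens : Measure.map E PΘ = volume.withDensity (fun y => ENNReal.ofReal (fE y)))
    (Q : Ξ × Θ → EuclideanSpace ℝ (Fin n)) (hQ : Q = fun p => Q₀ p.1)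
    (Z : Ξ × Θ → EuclideanSpace ℝ (Fin m)) (hZ : Z = fun p => YQ (Q₀ p.1) + E p.2) :
    ∀ (A : Set (EuclideanSpace ℝ (Fin n))) (B : Set (EuclideanSpace ℝ (Fin m))),
      MeasurableSet A → MeasurableSet B →
      (PΞ.prod PΘ) (Q ⁻¹' A ∩ Z ⁻¹' B)
        = ∫⁻ q in A, ENNReal.ofReal (∫ y in B, fE (y - YQ q)) ∂(Measure.map Q₀ PΞ) :=
  joint_probability_additive_error_general PΞ PΘ Q₀ hQ₀ YQ hYQ E hE fE hfEmeas hfE0 hfEdens Q hQ Z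
    hZ
end

section
/- Let Q₀ : Ξ → ℝ^n and Y_Q : ℝ^n → ℝ^m be measurable, define Q(ξ,θ) = Q₀(ξ) and Z(ξ,θ) = Y_Q(Q₀(ξ)) + E(θ) on the product space Ω = Ξ×Θ. Assume (Q₀)_*P_Ξ has density f_Q with respect to Lebesgue measure on ℝ^n, and that f_{Z|Q} : ℝ^n × ℝ^m → [0,∞) is measurable with P(Q⁻¹(A) ∩ Z⁻¹(B)) = ∫_{A×B} f_{Z|Q}(q,y) f_Q(q) dq dy for all Borel sets A ⊆ ℝ^n, B ⊆ ℝ^m. Then the likelihood satisfies f_{Z|Q}(q,y) · f_Q(q) = f_E(y − Y_Q(q)) · f_Q(q) for Lebesgue-almost every (q,y) ∈ ℝ^n × ℝ^m. -/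
open MeasureTheory
open scoped ENNReal

/-- For the measurement with additive error `Z(ξ,θ) = Y_Q(Q₀(ξ)) + E(θ)` and prior
density `f_Q` of `(Q₀)_*P_Ξ`, any likelihood `f_{Z|Q}` satisfies
`f_{Z|Q}(q,y) f_Q(q) = f_E(y − Y_Q(q)) f_Q(q)` Lebesgue-almost everywhere. -/
theorem likelihood_eq_error_density
    {Ξ Θ : Type*} [MeasurableSpace Ξ] [MeasurableSpace Θ]
    (PΞ : Measure Ξ) (PΘ : Measure Θ)
    [IsProbabilityMeasure PΞ] [IsProbabilityMeasure PΘ]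
    {n m : ℕ}
    (Q₀ : Ξ → EuclideanSpace ℝ (Fin n)) (hQ₀ : Measurable Q₀)
    (YQ : EuclideanSpace ℝ (Fin n) → EuclideanSpace ℝ (Fin m)) (hYQ : Measurable YQ)
    (E : Θ → EuclideanSpace ℝ (Fin m)) (hE : Measurable E)
    (fE : EuclideanSpace ℝ (Fin m) → ℝ) (hfEmeas : Measurable fE) (hfE0 : ∀ y, 0 ≤ fE y)
    (hfEdens : Measure.map E PΘ = volume.withDensity (fun y => ENNReal.ofReal (fE y)))
    (Q : Ξ × Θ → EuclideanSpace ℝ (Fin n)) (hQ : Q = fun p => Q₀ p.1)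
    (Z : Ξ × Θ → EuclideanSpace ℝ (Fin m)) (hZ : Z = fun p => YQ (Q₀ p.1) + E p.2)
    (fQ : EuclideanSpace ℝ (Fin n) → ℝ) (hfQmeas : Measurable fQ) (hfQ0 : ∀ q, 0 ≤ fQ q)
    (hfQdens : Measure.map Q₀ PΞ = volume.withDensity (fun q => ENNReal.ofReal (fQ q)))
    (fZgQ : EuclideanSpace ℝ (Fin n) × EuclideanSpace ℝ (Fin m) → ℝ)
    (hfZgQmeas : Measurable fZgQ) (hfZgQ0 : ∀ p, 0 ≤ fZgQ p)
    (hlik : ∀ (A : Set (EuclideanSpace ℝ (Fin n))) (B : Set (EuclideanSpace ℝ (Fin m))),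
      MeasurableSet A → MeasurableSet B →
      (PΞ.prod PΘ) (Q ⁻¹' A ∩ Z ⁻¹' B)
        = ∫⁻ p in A ×ˢ B, ENNReal.ofReal (fZgQ p * fQ p.1)) :
    ∀ᵐ p : EuclideanSpace ℝ (Fin n) × EuclideanSpace ℝ (Fin m),
      fZgQ p * fQ p.1 = fE (p.2 - YQ p.1) * fQ p.1 := by
  -- notation
  set F : EuclideanSpace ℝ (Fin n) × EuclideanSpace ℝ (Fin m) → ℝ≥0∞ :=
    fun p => ENNReal.ofReal (fZgQ p * fQ p.1) with hF
  set G : EuclideanSpace ℝ (Fin n) × EuclideanSpace ℝ (Fin m) → ℝ≥0∞ :=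
    fun p => ENNReal.ofReal (fE (p.2 - YQ p.1) * fQ p.1) with hG
  have hFmeas : Measurable F := (hfZgQmeas.mul (hfQmeas.comp measurable_fst)).ennreal_ofReal
  have hGmeas : Measurable G :=
    (((hfEmeas.comp ((measurable_snd.sub (hYQ.comp measurable_fst))))).mul
      (hfQmeas.comp measurable_fst)).ennreal_ofReal
  -- key computation of the joint law via the error density
  have key : ∀ (A : Set (EuclideanSpace ℝ (Fin n))) (B : Set (EuclideanSpace ℝ (Fin m))),
      MeasurableSet A → MeasurableSet B →
      (PΞ.prod PΘ) (Q ⁻¹' A ∩ Z ⁻¹' B) = ∫⁻ p in A ×ˢ B, G p := by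
    intro A B hA hB
    subst hQ hZ
    have hsmeas : MeasurableSet (((fun p : Ξ × Θ => Q₀ p.1) ⁻¹' A) ∩
        ((fun p : Ξ × Θ => YQ (Q₀ p.1) + E p.2) ⁻¹' B)) :=
      ((hQ₀.comp measurable_fst) hA).inter
        (((hYQ.comp (hQ₀.comp measurable_fst)).add (hE.comp measurable_snd)) hB)
    rw [Measure.prod_apply hsmeas]
    -- the inner function
    set g : EuclideanSpace ℝ (Fin n) → ℝ≥0∞ :=
      fun q => ∫⁻ y in B, ENNReal.ofReal (fE (y - YQ q)) with hg
    have hgmeas : Measurable g :=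
      Measurable.lintegral_prod_right' (ν := volume.restrict B)
        ((hfEmeas.comp (measurable_snd.sub (hYQ.comp measurable_fst))).ennreal_ofReal)
    -- slice computation
    have hslice : ∀ ξ : Ξ,
        PΘ (Prod.mk ξ ⁻¹' (((fun p : Ξ × Θ => Q₀ p.1) ⁻¹' A) ∩
          ((fun p : Ξ × Θ => YQ (Q₀ p.1) + E p.2) ⁻¹' B)))
        = A.indicator g (Q₀ ξ) := by
      intro ξ
      by_cases hQA : Q₀ ξ ∈ A
      · have hpre : Prod.mk ξ ⁻¹' (((fun p : Ξ × Θ => Q₀ p.1) ⁻¹' A) ∩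
            ((fun p : Ξ × Θ => YQ (Q₀ p.1) + E p.2) ⁻¹' B))
            = E ⁻¹' ((fun e => YQ (Q₀ ξ) + e) ⁻¹' B) := by
          ext θ; simp [hQA]
        have hBpre : MeasurableSet ((fun e => YQ (Q₀ ξ) + e) ⁻¹' B) :=
          (measurable_const_add _) hB
        have hmp : MeasurePreserving (fun e : EuclideanSpace ℝ (Fin m) => YQ (Q₀ ξ) + e)
            volume volume := measurePreserving_add_left volume _
        have hemb : MeasurableEmbedding (fun e : EuclideanSpace ℝ (Fin m) => YQ (Q₀ ξ) + e) :=
          (MeasurableEquiv.addLeft (YQ (Q₀ ξ))).measurableEmbedding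
        have htrans := hmp.setLIntegral_comp_preimage_emb hemb
          (fun y => ENNReal.ofReal (fE (y - YQ (Q₀ ξ)))) B
        simp only [add_sub_cancel_left] at htrans
        rw [hpre, Set.indicator_of_mem hQA, ← Measure.map_apply hE hBpre, hfEdens,
          withDensity_apply _ hBpre]
        simpa only [hg] using htrans
      · have hpre : Prod.mk ξ ⁻¹' (((fun p : Ξ × Θ => Q₀ p.1) ⁻¹' A) ∩
            ((fun p : Ξ × Θ => YQ (Q₀ p.1) + E p.2) ⁻¹' B)) = ∅ := by
          ext θ; simp [hQA]
        rw [hpre, Set.indicator_of_notMem hQA]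
        simp
    simp_rw [hslice]
    -- push forward through Q₀
    have hmap := lintegral_map (μ := PΞ) (f := A.indicator g) (hgmeas.indicator hA) hQ₀
    rw [← hmap, hfQdens,
      lintegral_withDensity_eq_lintegral_mul _ hfQmeas.ennreal_ofReal (hgmeas.indicator hA)]
    -- turn into a set integral over A
    have : ∀ q, (fun q => ENNReal.ofReal (fQ q)) q * A.indicator g q
        = A.indicator (fun q => ENNReal.ofReal (fQ q) * g q) q := by
      intro q; by_cases hq : q ∈ A <;> simp [hq]
    simp only [Pi.mul_apply]
    simp_rw [this]
    rw [lintegral_indicator hA]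
    -- now Tonelli on the RHS
    rw [Measure.volume_eq_prod, ← Measure.prod_restrict,
      lintegral_prod _ hGmeas.aemeasurable]
    congr 1 with q
    rw [hg, ← lintegral_const_mul _ (by fun_prop)]
    congr 1 with y
    simp only [hG]
    rw [ENNReal.ofReal_mul (hfE0 _), mul_comm]
  -- the two with-density measures
  set μ₁ : Measure (EuclideanSpace ℝ (Fin n) × EuclideanSpace ℝ (Fin m)) :=
    volume.withDensity F with hμ₁
  set μ₂ : Measure (EuclideanSpace ℝ (Fin n) × EuclideanSpace ℝ (Fin m)) :=
    volume.withDensity G with hμ₂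
  have hrect : ∀ (A : Set (EuclideanSpace ℝ (Fin n))) (B : Set (EuclideanSpace ℝ (Fin m))),
      MeasurableSet A → MeasurableSet B → μ₁ (A ×ˢ B) = μ₂ (A ×ˢ B) := by
    intro A B hA hB
    rw [hμ₁, hμ₂, withDensity_apply _ (hA.prod hB), withDensity_apply _ (hA.prod hB),
      ← hlik A B hA hB, key A B hA hB]
  have huniv : μ₁ Set.univ = μ₂ Set.univ := by
    rw [← Set.univ_prod_univ]
    exact hrect _ _ MeasurableSet.univ MeasurableSet.univ
  have hfin : IsFiniteMeasure μ₁ := by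
    constructor
    rw [huniv, ← Set.univ_prod_univ, hμ₂, withDensity_apply _ (MeasurableSet.univ.prod MeasurableSet.univ),
      ← key _ _ MeasurableSet.univ MeasurableSet.univ]
    exact lt_of_le_of_lt (measure_mono (Set.inter_subset_left)) (measure_lt_top _ _)
  have hμeq : μ₁ = μ₂ := by
    refine ext_of_generate_finite _ generateFrom_prod.symm isPiSystem_prod ?_ huniv
    rintro s ⟨A, hA, B, hB, rfl⟩
    exact hrect A B hA hB
  -- deduce a.e. equality of densities
  have hae : F =ᵐ[volume] G := by
    refine ae_eq_of_forall_setLIntegral_eq_of_sigmaFinite hFmeas hGmeas ?_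
    intro s hs _
    rw [← withDensity_apply _ hs, ← withDensity_apply _ hs, ← hμ₁, ← hμ₂, hμeq]
  filter_upwards [hae] with p hp
  rw [hF, hG] at hp
  have h1 : 0 ≤ fZgQ p * fQ p.1 := mul_nonneg (hfZgQ0 p) (hfQ0 _)
  have h2 : 0 ≤ fE (p.2 - YQ p.1) * fQ p.1 := mul_nonneg (hfE0 _) (hfQ0 _)
  exact (ENNReal.ofReal_eq_ofReal_iff h1 h2).mp hp
end
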